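/- arXiv:1609.08327 — 10 statements merged into one kernel-verified Lean document; each statement's English description precedes it below -/
import Mathlib

section
/- For a finitely presented module N over a commutative ring R and a flat R-module M, the natural map from (Dual of N) ⊗ M to Hom(N, M), sending w ⊗ m to the map n ↦ w(n) • m, is an isomorphism. -/
universe u

open LinearMap TensorProduct

/-!
Choose a presentation `F₁ → F₀ → N → 0` with `F₀`, `F₁` finite free. Applying `Hom(-, M)` and
`Hom(-, R) ⊗ M` gives two left exact rows: the first because `Hom(-, M)` is left exact, the
second because `Hom(-, R)` is and `- ⊗ M` preserves exactness, `M` being flat. `dualTensorHom`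
is natural, so it maps the second row to the first, and it is bijective on the finite free
terms; the five lemma then makes it bijective on `N`.
-/

theorem dualTensorHom_bijective_of_exact {R : Type*} [CommRing R]
    {F₁ F₀ N : Type*} [AddCommGroup F₁] [Module R F₁] [AddCommGroup F₀] [Module R F₀]
    [AddCommGroup N] [Module R N] (M : Type*) [AddCommGroup M] [Module R M] [Module.Flat R M]
    [Module.Finite R F₁] [Module.Projective R F₁] [Module.Finite R F₀] [Module.Projective R F₀]
    {f : F₁ →ₗ[R] F₀} {g : F₀ →ₗ[R] N} (hfg : Function.Exact f g) (hg : Function.Surjective g) :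
    Function.Bijective (dualTensorHom R N M) :=
  LinearMap.bijective_of_bijective_of_injective_of_left_exact
    (M₁ := Module.Dual R N ⊗[R] M) (M₂ := Module.Dual R F₀ ⊗[R] M) (M₃ := Module.Dual R F₁ ⊗[R] M)
    (g.dualMap.rTensor M) (f.dualMap.rTensor M) (g.lcomp R M) (f.lcomp R M)
    (dualTensorHom R N M) (dualTensorHom R F₀ M) (dualTensorHom R F₁ M)
    (dualTensorHom_comp_rTensor_dualMap g).symm (dualTensorHom_comp_rTensor_dualMap f).symm
    (Module.Flat.rTensor_exact M (exact_lcomp_of_exact_of_surjective R hfg hg))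
    (exact_lcomp_of_exact_of_surjective M hfg hg)
    dualTensorHom_bijective dualTensorHom_bijective.injective
    (Module.Flat.rTensor_preserves_injective_linearMap _ (dualMap_injective_of_surjective hg))
    (lcomp_injective_of_surjective g hg)

/-- For a finitely presented module `N` over a commutative ring `R` and a flat `R`-module `M`,
the natural map `N* ⊗ M → Hom(N, M)`, `w ⊗ m ↦ (n ↦ w n • m)`, is an isomorphism. -/
theorem dualTensorHom_bijective_of_finitePresentation_of_flat
    (R : Type u) [CommRing R]
    (N : Type u) [AddCommGroup N] [Module R N] [Module.FinitePresentation R N]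
    (M : Type u) [AddCommGroup M] [Module R M] [Module.Flat R M] :
    Function.Bijective (dualTensorHom R N M) := by
  obtain ⟨_, _, g, f, hg, hfg⟩ := Module.FinitePresentation.exists_fin' R N
  exact dualTensorHom_bijective_of_exact M hfg hg
end

section
/- Let R be a commutative ring, M a flat R-module, N a finitely presented R-module, and f : N → M an R-linear map. Then there exist a finitely generated free R-module L and R-linear maps g : N → L and h : L → M such that h ∘ g = f. -/
universe u

/-- Every linear map from a finitely presented module to a flat module factors through a
finitely generated free module. -/
theorem factors_through_free_of_flat
    (R : Type u) [CommRing R]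
    (N : Type u) [AddCommGroup N] [Module R N] [Module.FinitePresentation R N]
    (M : Type u) [AddCommGroup M] [Module R M] [Module.Flat R M]
    (f : N →ₗ[R] M) :
    ∃ (n : ℕ) (g : N →ₗ[R] (Fin n → R)) (h : (Fin n → R) →ₗ[R] M),
      h ∘ₗ g = f := by
  obtain ⟨n, g, h, rfl⟩ := Module.Flat.exists_factorization_of_finitePresentation f
  let e := Finsupp.linearEquivFunOnFinite R R (Fin n)
  exact ⟨n, e ∘ₗ g, h ∘ₗ e.symm, by ext; simp⟩
end

section
/- Let R be a commutative ring and M a flat Mittag-Leffler R-module. Then for every R-module N, the canonical map from N* ⊗_R M to Hom_R(N, M), sending w ⊗ m to n ↦ w(n) • m, is injective. -/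
universe u

open TensorProduct

/-- `M` is a Mittag-Leffler module: for every family of `R`-modules `(Q i)`, the canonical map
`M ⊗ (∏ i, Q i) → ∏ i, (M ⊗ Q i)` is injective. -/
def IsMittagLeffler (R : Type u) [CommRing R]
    (M : Type u) [AddCommGroup M] [Module R M] : Prop :=
  ∀ (ι : Type u) (Q : ι → Type u) [∀ i, AddCommGroup (Q i)] [∀ i, Module R (Q i)],
    Function.Injective (TensorProduct.piRightHom R R M Q)

/-- If `M` is a flat Mittag-Leffler module then, for every module `N`, the canonical map
`N* ⊗ M → Hom(N, M)` is injective. -/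
theorem dualTensorHom_injective_of_flat_mittagLeffler
    (R : Type u) [CommRing R]
    (M : Type u) [AddCommGroup M] [Module R M]
    [Module.Flat R M] (hML : IsMittagLeffler R M)
    (N : Type u) [AddCommGroup N] [Module R N] :
    Function.Injective (dualTensorHom R N M) := by
  classical
  -- evaluation map Hom(N, M) → (N → M)
  let ev : (N →ₗ[R] M) →ₗ[R] (N → M) := LinearMap.pi (fun n => LinearMap.applyₗ n)
  -- inclusion N* → (N → R)
  let incl : Module.Dual R N →ₗ[R] (N → R) := LinearMap.pi (fun n => LinearMap.applyₗ n)
  have hincl : Function.Injective incl := by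
    intro a b h
    ext n
    exact congrFun h n
  let f1 := (TensorProduct.comm R (Module.Dual R N) M).toLinearMap
  have hf1 : Function.Injective f1 := (TensorProduct.comm R (Module.Dual R N) M).injective
  let f2 := LinearMap.lTensor M incl
  have hf2 : Function.Injective f2 :=
    Module.Flat.lTensor_preserves_injective_linearMap incl hincl
  let f3 := TensorProduct.piRightHom R R M (fun _ : N => R)
  have hf3 : Function.Injective f3 := hML N (fun _ => R)
  let f4 : (N → M ⊗[R] R) →ₗ[R] (N → M) :=
    LinearMap.pi (fun n => (TensorProduct.rid R M).toLinearMap ∘ₗ LinearMap.proj n)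
  have hf4 : Function.Injective f4 := by
    intro a b h
    funext n
    exact (TensorProduct.rid R M).injective (congrFun h n)
  have key : ev ∘ₗ dualTensorHom R N M = f4 ∘ₗ f3 ∘ₗ f2 ∘ₗ f1 := by
    apply TensorProduct.ext'
    intro w m
    funext n
    simp [ev, f1, f2, f3, f4, incl, TensorProduct.smul_tmul']
  have hF : Function.Injective (f4 ∘ₗ f3 ∘ₗ f2 ∘ₗ f1) := by
    intro a b h
    exact hf1 (hf2 (hf3 (hf4 h)))
  intro x y h
  have : (ev ∘ₗ dualTensorHom R N M) x = (ev ∘ₗ dualTensorHom R N M) y := by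
    simp [LinearMap.comp_apply, h]
  rw [key] at this
  exact hF this
end

section
/- A flat R-module M is Mittag-Leffler if and only if for every n and every element x ∈ R^n ⊗_R M there exists a smallest submodule W ⊆ R^n such that x lies in the image of W ⊗_R M → R^n ⊗_R M. -/
universe u

open TensorProduct

section Aux

variable {R : Type u} [CommRing R] {M : Type u} [AddCommGroup M] [Module R M]

/-- For flat `M`, the kernel of `ψ ⊗ 1 : N ⊗ M → P ⊗ M` is the image of `(ker ψ) ⊗ M`. -/
lemma ker_rTensor_flat [Module.Flat R M] {N P : Type u} [AddCommGroup N] [AddCommGroup P]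
    [Module R N] [Module R P] (ψ : N →ₗ[R] P) :
    LinearMap.ker (ψ.rTensor M) = LinearMap.range ((LinearMap.ker ψ).subtype.rTensor M) :=
  (Module.Flat.rTensor_exact M (LinearMap.exact_subtype_ker_map ψ)).linearMap_ker_eq

lemma ker_rTensor_mkQ [Module.Flat R M] {N : Type u} [AddCommGroup N] [Module R N]
    (W : Submodule R N) :
    LinearMap.ker (W.mkQ.rTensor M) = LinearMap.range (W.subtype.rTensor M) := by
  rw [ker_rTensor_flat, Submodule.ker_mkQ]

lemma range_rTensor_mono {N : Type u} [AddCommGroup N] [Module R N]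
    {W W' : Submodule R N} (h : W ≤ W') :
    LinearMap.range (W.subtype.rTensor M) ≤ LinearMap.range (W'.subtype.rTensor M) := by
  rw [← Submodule.subtype_comp_inclusion W W' h, LinearMap.rTensor_comp]
  exact LinearMap.range_comp_le_range _ _

lemma piRightHom_comm_rTensor {N : Type u} [AddCommGroup N] [Module R N]
    {ι : Type u} (Q : ι → Type u) [∀ i, AddCommGroup (Q i)] [∀ i, Module R (Q i)]
    (ψ : N →ₗ[R] ∀ i, Q i) (x : N ⊗[R] M) (i : ι) :
    TensorProduct.piRightHom R R M Q
        ((TensorProduct.comm R (∀ i, Q i) M) (ψ.rTensor M x)) i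
      = (TensorProduct.comm R (Q i) M) (((LinearMap.proj i ∘ₗ ψ).rTensor M) x) := by
  induction x using TensorProduct.induction_on with
  | zero => simp
  | tmul v m => simp
  | add a b ha hb => simp [ha, hb]

lemma rTensor_eq_zero_of_components [Module.Flat R M] {ι : Type u} (Q : ι → Type u)
    [∀ i, AddCommGroup (Q i)] [∀ i, Module R (Q i)]
    (hinj : Function.Injective (TensorProduct.piRightHom R R M Q))
    {N : Type u} [AddCommGroup N] [Module R N] (ψ : N →ₗ[R] ∀ i, Q i) (x : N ⊗[R] M)
    (h0 : ∀ i, ((LinearMap.proj i ∘ₗ ψ).rTensor M) x = 0) :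
    (ψ.rTensor M) x = 0 := by
  apply (TensorProduct.comm R (∀ i, Q i) M).injective
  rw [map_zero]
  apply hinj
  rw [map_zero]
  funext i
  rw [piRightHom_comm_rTensor, h0 i, map_zero]
  rfl

end Aux

/-- A flat module `M` is Mittag-Leffler iff for every `n` and every `x ∈ R^n ⊗ M` there is a
smallest submodule `W ⊆ R^n` such that `x` lies in the image of `W ⊗ M → R^n ⊗ M`. -/
theorem isMittagLeffler_iff_exists_smallest_submodule
    (R : Type u) [CommRing R]
    (M : Type u) [AddCommGroup M] [Module R M] [Module.Flat R M] :
    IsMittagLeffler R M ↔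
      ∀ (n : ℕ) (x : (Fin n → R) ⊗[R] M),
        ∃ W : Submodule R (Fin n → R),
          (x ∈ LinearMap.range
              (TensorProduct.map W.subtype (LinearMap.id : M →ₗ[R] M))) ∧
          ∀ W' : Submodule R (Fin n → R),
            (x ∈ LinearMap.range
                (TensorProduct.map W'.subtype (LinearMap.id : M →ₗ[R] M))) →
            W ≤ W' := by
  constructor
  · -- Mittag-Leffler implies existence of smallest submodules.
    intro hML n x
    let ι : Type u := {W' : Submodule R (Fin n → R) //
        x ∈ LinearMap.range (TensorProduct.map W'.subtype (LinearMap.id : M →ₗ[R] M))}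
    let Q : ι → Type u := fun s => (Fin n → R) ⧸ s.1
    let ψ : (Fin n → R) →ₗ[R] (∀ s : ι, Q s) := LinearMap.pi (fun s => s.1.mkQ)
    refine ⟨LinearMap.ker ψ, ?_, ?_⟩
    · show x ∈ LinearMap.range ((LinearMap.ker ψ).subtype.rTensor M)
      rw [← ker_rTensor_flat, LinearMap.mem_ker]
      apply rTensor_eq_zero_of_components Q (hML ι Q)
      intro s
      have hp : (LinearMap.proj s ∘ₗ ψ) = s.1.mkQ := LinearMap.proj_pi _ s
      rw [hp, ← LinearMap.mem_ker, ker_rTensor_mkQ]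
      exact s.2
    · intro W' hW'
      have hk : LinearMap.ker ψ = ⨅ s : ι, s.1 := by
        rw [LinearMap.ker_pi]
        exact iInf_congr fun s => Submodule.ker_mkQ s.1
      rw [hk]
      exact iInf_le (fun s : ι => s.1) ⟨W', hW'⟩
  · -- Existence of smallest submodules implies Mittag-Leffler.
    intro h ι Q _ _
    classical
    rw [injective_iff_map_eq_zero]
    intro x hx
    obtain ⟨T, hT⟩ := TensorProduct.exists_finset x
    set n := T.card with hn
    let e : T ≃ Fin n := T.equivFin
    let m : Fin n → M := fun k => ((e.symm k : T) : M × (∀ i, Q i)).1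
    let q : Fin n → ∀ i, Q i := fun k => ((e.symm k : T) : M × (∀ i, Q i)).2
    have hxsum : x = ∑ k : Fin n, m k ⊗ₜ[R] q k := by
      rw [hT, ← Finset.sum_attach T (fun p => p.1 ⊗ₜ[R] p.2)]
      exact (Fintype.sum_equiv e.symm _ _ (fun k => rfl)).symm
    let ψ : (Fin n → R) →ₗ[R] (∀ i, Q i) :=
      ∑ k : Fin n, (LinearMap.proj k : (Fin n → R) →ₗ[R] R).smulRight (q k)
    have hψs : ∀ k, ψ (Pi.single k 1) = q k := by
      intro k
      simp only [ψ, LinearMap.sum_apply, LinearMap.smulRight_apply, LinearMap.proj_apply]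
      rw [Finset.sum_eq_single k]
      · simp
      · intro j _ hj
        rw [Pi.single_eq_of_ne hj, zero_smul]
      · simp
    let x₀ : (Fin n → R) ⊗[R] M := ∑ k : Fin n, (Pi.single k (1 : R) : Fin n → R) ⊗ₜ[R] m k
    have hr : ∀ {P : Type u} [AddCommGroup P] [Module R P] (f : (Fin n → R) →ₗ[R] P),
        (f.rTensor M) x₀ = ∑ k : Fin n, f (Pi.single k 1) ⊗ₜ[R] m k := by
      intro P _ _ f
      rw [map_sum]
      exact Finset.sum_congr rfl fun k _ => rfl
    obtain ⟨W, hxW, hmin⟩ := h n x₀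
    have hWker : W ≤ LinearMap.ker ψ := by
      intro v hv
      rw [LinearMap.mem_ker]
      funext i
      have h1 : ((LinearMap.proj i ∘ₗ ψ).rTensor M) x₀ = 0 := by
        rw [hr]
        have h2 : TensorProduct.piRightHom R R M Q x i = 0 := by rw [hx]; rfl
        rw [hxsum] at h2
        simp only [map_sum, TensorProduct.piRightHom_tmul, Finset.sum_apply] at h2
        have h2' : ∑ k : Fin n, (LinearMap.proj i ∘ₗ ψ) (Pi.single k 1) ⊗ₜ[R] m k
            = (TensorProduct.comm R M (Q i)) (∑ k : Fin n, m k ⊗ₜ[R] q k i) := by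
          rw [map_sum]
          exact Finset.sum_congr rfl fun k _ => by simp [hψs k]
        rw [h2', h2, map_zero]
      have h3 : x₀ ∈ LinearMap.range
          ((LinearMap.ker (LinearMap.proj i ∘ₗ ψ)).subtype.rTensor M) := by
        rw [← ker_rTensor_flat, LinearMap.mem_ker]
        exact h1
      have h4 : W ≤ LinearMap.ker (LinearMap.proj i ∘ₗ ψ) := hmin _ h3
      have := h4 hv
      rw [LinearMap.mem_ker] at this
      simpa using this
    have h5 : x₀ ∈ LinearMap.range ((LinearMap.ker ψ).subtype.rTensor M) :=
      range_rTensor_mono hWker hxW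
    have h6 : (ψ.rTensor M) x₀ = 0 := by
      rw [← LinearMap.mem_ker, ker_rTensor_flat]
      exact h5
    have h7 : (TensorProduct.comm R M (∀ i, Q i)) x = 0 := by
      rw [hxsum, map_sum, ← h6, hr]
      exact Finset.sum_congr rfl fun k _ => by simp [hψs k]
    exact (TensorProduct.comm R M (∀ i, Q i)).map_eq_zero_iff.mp h7
end

section
/- An R-module M is a flat Mittag-Leffler module if and only if for every R-module N and every x ∈ M ⊗_R N there exists a smallest pair (N', x') where N' is a submodule of N and x' ∈ M ⊗_R N' maps to x under M ⊗_R N' → M ⊗_R N; smallest meaning that for any other such pair (N'', x'') we have N' ⊆ N''. -/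
universe u

open TensorProduct

/-!
Write `S(x)` (`liftingSubmodules M x`) for the set of submodules `P ≤ N` such that `x ∈ M ⊗ N`
comes from `M ⊗ P`.
When `M` is flat, `ker f ∈ S(x)` exactly when `(1 ⊗ f) x = 0`. So if `M` is moreover
Mittag-Leffler, `⋂ S(x)` is the kernel of `N → ∏_{P ∈ S(x)} N / P`, and `x` dies there because
its image in `∏_{P ∈ S(x)} M ⊗ N / P` is zero; hence `⋂ S(x)` is the smallest element of `S(x)`.

Conversely, if `y ∈ M ⊗ P` vanishes in `M ⊗ N`, then its image `x` in `M ⊗ (N × P)` comes both from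
`0 × P` and from the graph of `P ↪ N`; these meet in `0`, so the smallest element of `S(x)` is `0`
and `y = 0`. This gives flatness, and then the kernels of the projections `∏ Q_i → Q_i`, whose
intersection is `0`, all lie in `S(x)` for any `x` killed by `M ⊗ ∏ Q_i → ∏ M ⊗ Q_i`.
-/

open LinearMap

section

variable {R M N : Type*} [CommRing R] [AddCommGroup M] [Module R M] [AddCommGroup N] [Module R N]

variable (M) in
def liftingSubmodules (x : M ⊗[R] N) : Set (Submodule R N) :=
  {P | x ∈ range (P.subtype.lTensor M)}

lemma exists_smallest_pair_iff (x : M ⊗[R] N) :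
    (∃ (N' : Submodule R N) (x' : M ⊗[R] N'),
        TensorProduct.map (LinearMap.id : M →ₗ[R] M) N'.subtype x' = x ∧
        ∀ (N'' : Submodule R N) (x'' : M ⊗[R] N''),
          TensorProduct.map (LinearMap.id : M →ₗ[R] M) N''.subtype x'' = x → N' ≤ N'') ↔
      ∃ L, IsLeast (liftingSubmodules M x) L := by
  constructor
  · rintro ⟨L, y, hy, hL⟩
    exact ⟨L, ⟨y, hy⟩, fun P ⟨z, hz⟩ => hL P z hz⟩
  · rintro ⟨L, ⟨y, hy⟩, hL⟩
    exact ⟨L, y, hy, fun P z hz => hL ⟨z, hz⟩⟩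

lemma range_mem_liftingSubmodules {P : Type*} [AddCommGroup P] [Module R P] (f : P →ₗ[R] N)
    (y : M ⊗[R] P) : range f ∈ liftingSubmodules M (f.lTensor M y) :=
  ⟨f.rangeRestrict.lTensor M y, by rw [← comp_apply, ← lTensor_comp]; rfl⟩

lemma liftingSubmodules_mono {x : M ⊗[R] N} {P Q : Submodule R N} (hPQ : P ≤ Q)
    (hP : P ∈ liftingSubmodules M x) : Q ∈ liftingSubmodules M x := by
  obtain ⟨y, rfl⟩ := hP
  exact ⟨(Submodule.inclusion hPQ).lTensor M y, by rw [← comp_apply, ← lTensor_comp]; rfl⟩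

lemma eq_zero_of_bot_mem_liftingSubmodules {x : M ⊗[R] N} (h : ⊥ ∈ liftingSubmodules M x) :
    x = 0 := by
  obtain ⟨y, rfl⟩ := h
  rw [Subsingleton.elim y 0, map_zero]

lemma ker_mem_liftingSubmodules_iff [Module.Flat R M] {P : Type*} [AddCommGroup P] [Module R P]
    (f : N →ₗ[R] P) (x : M ⊗[R] N) :
    ker f ∈ liftingSubmodules M x ↔ f.lTensor M x = 0 :=
  (Module.Flat.lTensor_exact M (exact_subtype_ker_map f) x).symm

lemma TensorProduct.piRightHom_apply {ι : Type*} {Q : ι → Type*} [∀ i, AddCommGroup (Q i)]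
    [∀ i, Module R (Q i)] (x : M ⊗[R] ∀ i, Q i) (i : ι) :
    piRightHom R R M Q x i = (proj i).lTensor M x := by
  induction x using TensorProduct.induction_on with
  | zero => simp
  | tmul m q => rfl
  | add a b ha hb => simp only [map_add, Pi.add_apply, ha, hb]

lemma lTensor_subtype_injective_of_isLeast (P : Submodule R N)
    (h : ∀ x : M ⊗[R] (N × P), ∃ L, IsLeast (liftingSubmodules M x) L) :
    Function.Injective (P.subtype.lTensor M) := by
  rw [injective_iff_map_eq_zero]
  intro y hy
  set x := (inr R N P).lTensor M y
  obtain ⟨L, hL_mem, hL_le⟩ := h x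
  have h_inr : range (inr R N P) ∈ liftingSubmodules M x := range_mem_liftingSubmodules _ y
  have h_graph : range (P.subtype.prod id) ∈ liftingSubmodules M x := by
    have hsum : P.subtype.prod id = inl R N P ∘ₗ P.subtype + inr R N P := by
      ext p <;> simp
    have hy_graph : (P.subtype.prod id).lTensor M y = x := by
      rw [hsum, lTensor_add, LinearMap.add_apply, lTensor_comp, comp_apply, hy, map_zero, zero_add]
    exact hy_graph ▸ range_mem_liftingSubmodules _ y
  have h_inf : range (inr R N P) ⊓ range (P.subtype.prod id) = ⊥ := by
    rw [eq_bot_iff]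
    rintro _ ⟨⟨p, rfl⟩, ⟨q, hq⟩⟩
    have hpq : q = p := congr_arg Prod.snd hq
    have hq0 : (q : N) = 0 := congr_arg Prod.fst hq
    simpa [← hpq] using hq0
  have hx : x = 0 := eq_zero_of_bot_mem_liftingSubmodules <|
    liftingSubmodules_mono (h_inf ▸ le_inf (hL_le h_inr) (hL_le h_graph)) hL_mem
  simpa [x, ← comp_apply, ← lTensor_comp] using congr_arg ((snd R N P).lTensor M) hx

lemma piRightHom_injective_of_isLeast [Module.Flat R M] {ι : Type*} {Q : ι → Type*}
    [∀ i, AddCommGroup (Q i)] [∀ i, Module R (Q i)]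
    (h : ∀ x : M ⊗[R] ∀ i, Q i, ∃ L, IsLeast (liftingSubmodules M x) L) :
    Function.Injective (piRightHom R R M Q) := by
  rw [injective_iff_map_eq_zero]
  intro x hx
  obtain ⟨L, hL_mem, hL_le⟩ := h x
  have h_ker : ∀ i, ker (proj i : (∀ i, Q i) →ₗ[R] Q i) ∈ liftingSubmodules M x := fun i =>
    (ker_mem_liftingSubmodules_iff _ x).2 (by rw [← piRightHom_apply, hx, Pi.zero_apply])
  refine eq_zero_of_bot_mem_liftingSubmodules (liftingSubmodules_mono ?_ hL_mem)
  exact iInf_ker_proj (R := R) (φ := Q) ▸ le_iInf fun i => hL_le (h_ker i)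

end

section

variable {R M N : Type u} [CommRing R] [AddCommGroup M] [Module R M] [AddCommGroup N] [Module R N]

lemma iInf_mem_liftingSubmodules [Module.Flat R M] (hM : IsMittagLeffler R M) {x : M ⊗[R] N}
    {ι : Type u} (P : ι → Submodule R N) (hP : ∀ i, P i ∈ liftingSubmodules M x) :
    ⨅ i, P i ∈ liftingSubmodules M x := by
  have h_ker : ⨅ i, P i = ker (pi fun i => (P i).mkQ) := by simp [ker_pi]
  rw [h_ker, ker_mem_liftingSubmodules_iff]
  refine hM ι (fun i => N ⧸ P i) ?_
  rw [map_zero]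
  funext i
  rw [piRightHom_apply, ← comp_apply, ← lTensor_comp, proj_pi, Pi.zero_apply,
    ← ker_mem_liftingSubmodules_iff, Submodule.ker_mkQ]
  exact hP i

lemma isLeast_sInf_liftingSubmodules [Module.Flat R M] (hM : IsMittagLeffler R M)
    (x : M ⊗[R] N) : IsLeast (liftingSubmodules M x) (sInf (liftingSubmodules M x)) :=
  ⟨sInf_eq_iInf' (liftingSubmodules M x) ▸ iInf_mem_liftingSubmodules hM _ fun P => P.2,
    fun _ hP => sInf_le hP⟩

end

/-- `M` is a flat Mittag-Leffler module iff for every module `N` and every `x ∈ M ⊗ N` there is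
a smallest pair `(N', x')` with `N' ⊆ N` a submodule and `x' ∈ M ⊗ N'` mapping to `x`. -/
theorem flat_mittagLeffler_iff_smallest_pair
    (R : Type u) [CommRing R]
    (M : Type u) [AddCommGroup M] [Module R M] :
    (Module.Flat R M ∧ IsMittagLeffler R M) ↔
      ∀ (N : Type u) [AddCommGroup N] [Module R N] (x : M ⊗[R] N),
        ∃ (N' : Submodule R N) (x' : M ⊗[R] N'),
          TensorProduct.map (LinearMap.id : M →ₗ[R] M) N'.subtype x' = x ∧
          ∀ (N'' : Submodule R N) (x'' : M ⊗[R] N''),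
            TensorProduct.map (LinearMap.id : M →ₗ[R] M) N''.subtype x'' = x →
            N' ≤ N'' := by
  simp only [exists_smallest_pair_iff]
  constructor
  · rintro ⟨_, hM⟩ N _ _ x
    exact ⟨_, isLeast_sInf_liftingSubmodules hM x⟩
  · intro h
    have : Module.Flat R M := Module.Flat.iff_lTensor_injective'.2 fun I =>
      lTensor_subtype_injective_of_isLeast I (h _)
    exact ⟨this, fun ι Q _ _ => piRightHom_injective_of_isLeast (h _)⟩
end

section
/- Let f : M₁ → M₂ be a universally injective morphism of R-modules (i.e., f ⊗ id_Q is injective for every R-module Q). If M₂ is a flat Mittag-Leffler module, then M₁ is a flat Mittag-Leffler module. -/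
universe u

open TensorProduct

/-- If `f : M₁ → M₂` is universally injective and `M₂` is a flat Mittag-Leffler module, then
`M₁` is a flat Mittag-Leffler module. -/
theorem flat_mittagLeffler_of_universally_injective
    (R : Type u) [CommRing R]
    (M₁ : Type u) [AddCommGroup M₁] [Module R M₁]
    (M₂ : Type u) [AddCommGroup M₂] [Module R M₂]
    (f : M₁ →ₗ[R] M₂)
    (hf : ∀ (Q : Type u) [AddCommGroup Q] [Module R Q],
      Function.Injective (LinearMap.rTensor Q f))
    (h₂flat : Module.Flat R M₂) (h₂ML : IsMittagLeffler R M₂) :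
    Module.Flat R M₁ ∧ IsMittagLeffler R M₁ := by
  constructor
  · rw [Module.Flat.iff_lTensor_injective']
    intro I
    have hcomm : (LinearMap.rTensor R f).comp (LinearMap.lTensor M₁ I.subtype)
        = (LinearMap.lTensor M₂ I.subtype).comp (LinearMap.rTensor (↥I) f) := by
      rw [LinearMap.rTensor_comp_lTensor, LinearMap.lTensor_comp_rTensor]
    have h1 : Function.Injective
        ((LinearMap.rTensor R f).comp (LinearMap.lTensor M₁ I.subtype)) := by
      rw [hcomm]
      exact (Module.Flat.lTensor_preserves_injective_linearMap _ I.injective_subtype).comp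
        (hf (↥I))
    exact fun a b hab => h1 (by rw [LinearMap.comp_apply, LinearMap.comp_apply, hab])
  · intro ι Q _ _
    have key : ∀ x : M₁ ⊗[R] (∀ i, Q i),
        TensorProduct.piRightHom R R M₂ Q (LinearMap.rTensor _ f x)
          = fun i => LinearMap.rTensor (Q i) f (TensorProduct.piRightHom R R M₁ Q x i) := by
      intro x
      induction x using TensorProduct.induction_on with
      | zero => funext i; simp
      | tmul m q => ext i; simp [TensorProduct.piRightHom_tmul]
      | add a b ha hb =>
          simp only [map_add] at *
          funext i
          simp [ha, hb, Pi.add_apply]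
    intro a b hab
    apply hf (∀ i, Q i)
    apply h₂ML ι Q
    rw [key, key, hab]
end

section
/- Let 0 → M₁ → M → M₂ → 0 be a short exact sequence of R-modules with M₁ → M universally injective. If M₁ and M₂ are flat Mittag-Leffler modules, then M is a flat Mittag-Leffler module. -/
universe u

open TensorProduct

/-!
Both properties are injectivity statements for a natural transformation `M ⊗ X → Y(M)` (the
inclusion `M ⊗ I → M ⊗ R` of an ideal, resp. `M ⊗ ∏ Q i → ∏ (M ⊗ Q i)`). Tensoring the extension
gives an exact row `M₁ ⊗ X → M ⊗ X → M₂ ⊗ X` over a row `Y(M₁) → Y(M) → Y(M₂)` whose first map is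
injective since `M₁ → M` is universally injective, and a four-lemma chase transfers injectivity from
the outer columns to the middle one.
-/

namespace LinearMap

variable {R : Type*} [CommRing R]
  {A B C A' B' C' : Type*} [AddCommGroup A] [AddCommGroup B] [AddCommGroup C]
  [AddCommGroup A'] [AddCommGroup B'] [AddCommGroup C']
  [Module R A] [Module R B] [Module R C] [Module R A'] [Module R B'] [Module R C']

theorem injective_of_injective_of_injective_of_exact
    {f : A →ₗ[R] B} {g : B →ₗ[R] C} {f' : A' →ₗ[R] B'} {g' : B' →ₗ[R] C'}
    {α : A →ₗ[R] A'} {β : B →ₗ[R] B'} {γ : C →ₗ[R] C'}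
    (hfg : Function.Exact f g) (hf' : Function.Injective f')
    (hα : Function.Injective α) (hγ : Function.Injective γ)
    (hsq₁ : f' ∘ₗ α = β ∘ₗ f) (hsq₂ : g' ∘ₗ β = γ ∘ₗ g) :
    Function.Injective β := by
  rw [injective_iff_map_eq_zero]
  intro b hb
  have hgb : g b = 0 := hγ <| by
    rw [map_zero, ← comp_apply, ← hsq₂, comp_apply, hb, map_zero]
  obtain ⟨a, rfl⟩ := (hfg b).mp hgb
  have ha : a = 0 := hα <| hf' <| by
    rw [map_zero, map_zero, ← comp_apply, hsq₁, comp_apply, hb]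
  rw [ha, map_zero]

theorem rTensor_self_injective {f : A →ₗ[R] B} (hf : Function.Injective f) :
    Function.Injective (f.rTensor R) := by
  have hrid : f.rTensor R
      = (TensorProduct.rid R B).symm.toLinearMap ∘ₗ f ∘ₗ (TensorProduct.rid R A).toLinearMap := by
    ext; simp
  rw [hrid, coe_comp, coe_comp]
  exact (TensorProduct.rid R B).symm.injective.comp (hf.comp (TensorProduct.rid R A).injective)

end LinearMap

open LinearMap

theorem Module.Flat.of_exact {R M₁ M M₂ : Type*} [CommRing R]
    [AddCommGroup M₁] [AddCommGroup M] [AddCommGroup M₂]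
    [Module R M₁] [Module R M] [Module R M₂]
    {f : M₁ →ₗ[R] M} {g : M →ₗ[R] M₂} (hf : Function.Injective f) (hfg : Function.Exact f g)
    (hg : Function.Surjective g) [Module.Flat R M₁] [Module.Flat R M₂] :
    Module.Flat R M := by
  rw [Module.Flat.iff_lTensor_injective']
  intro I
  exact injective_of_injective_of_injective_of_exact (_root_.rTensor_exact I hfg hg)
    (rTensor_self_injective hf) (Module.Flat.iff_lTensor_injective'.mp ‹Flat R M₁› I)
    (Module.Flat.iff_lTensor_injective'.mp ‹Flat R M₂› I)
    ((rTensor_comp_lTensor _ f I.subtype).trans (lTensor_comp_rTensor _ f I.subtype).symm)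
    ((rTensor_comp_lTensor _ g I.subtype).trans (lTensor_comp_rTensor _ g I.subtype).symm)

theorem TensorProduct.piMap_rTensor_comp_piRightHom {R A B : Type u} [CommRing R]
    [AddCommGroup A] [Module R A] [AddCommGroup B] [Module R B]
    (φ : A →ₗ[R] B) {ι : Type u} (Q : ι → Type u)
    [∀ i, AddCommGroup (Q i)] [∀ i, Module R (Q i)] :
    piMap (fun i ↦ φ.rTensor (Q i)) ∘ₗ piRightHom R R A Q
      = piRightHom R R B Q ∘ₗ φ.rTensor (∀ i, Q i) := by
  ext a q i
  simp [piRightHom_tmul]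

theorem IsMittagLeffler.of_exact {R M₁ M M₂ : Type u} [CommRing R]
    [AddCommGroup M₁] [AddCommGroup M] [AddCommGroup M₂]
    [Module R M₁] [Module R M] [Module R M₂]
    {f : M₁ →ₗ[R] M} {g : M →ₗ[R] M₂}
    (hf : ∀ (Q : Type u) [AddCommGroup Q] [Module R Q], Function.Injective (f.rTensor Q))
    (hfg : Function.Exact f g) (hg : Function.Surjective g)
    (h₁ : IsMittagLeffler R M₁) (h₂ : IsMittagLeffler R M₂) :
    IsMittagLeffler R M := by
  intro ι Q _ _
  exact injective_of_injective_of_injective_of_exact (_root_.rTensor_exact _ hfg hg)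
    (Function.Injective.piMap fun i ↦ hf (Q i)) (h₁ ι Q) (h₂ ι Q)
    (piMap_rTensor_comp_piRightHom f Q) (piMap_rTensor_comp_piRightHom g Q)

/-- If `0 → M₁ → M → M₂ → 0` is a short exact sequence with `M₁ → M` universally injective and
`M₁`, `M₂` flat Mittag-Leffler, then `M` is a flat Mittag-Leffler module. -/
theorem flat_mittagLeffler_of_extension
    (R : Type u) [CommRing R]
    (M₁ : Type u) [AddCommGroup M₁] [Module R M₁]
    (M : Type u) [AddCommGroup M] [Module R M]
    (M₂ : Type u) [AddCommGroup M₂] [Module R M₂]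
    (f : M₁ →ₗ[R] M) (g : M →ₗ[R] M₂)
    (hinj : Function.Injective f) (hsurj : Function.Surjective g)
    (hexact : LinearMap.range f = LinearMap.ker g)
    (huniv : ∀ (Q : Type u) [AddCommGroup Q] [Module R Q],
      Function.Injective (LinearMap.rTensor Q f))
    (h₁flat : Module.Flat R M₁) (h₁ML : IsMittagLeffler R M₁)
    (h₂flat : Module.Flat R M₂) (h₂ML : IsMittagLeffler R M₂) :
    Module.Flat R M ∧ IsMittagLeffler R M := by
  have hfg : Function.Exact f g := LinearMap.exact_iff.mpr hexact.symm
  exact ⟨Module.Flat.of_exact hinj hfg hsurj, IsMittagLeffler.of_exact huniv hfg hsurj h₁ML h₂ML⟩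
end

section
/- A countably generated flat Mittag-Leffler module over a commutative ring R is projective. -/
/-
Write `M` as the union of the images of a chain `F₀ → F₁ → ⋯ → M` of finite free modules, one
generator being added at each step. Flatness and the Mittag-Leffler property allow each
`fₙ : Fₙ → Fₙ₊₁` to be chosen so that it factors through every map from `Fₙ` to a finite free
module through which `Fₙ → M` factors. Then the kernel of `Fₙ → M` dies in `Fₙ₊₁`, which makes
`⨁ Fₙ → ⨁ Fₙ → M → 0` exact, the first map being `1 - shift`; and `fₙ` factors through
`fₙ₊₁ ∘ fₙ`, which lets one build a retraction of `1 - shift`. So `M` is a direct summand of the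
projective module `⨁ Fₙ`.
-/

universe u

open TensorProduct

open DirectSum Filter

theorem Matrix.sum_col_tmul_mkQ_single_eq_zero {R ι κ : Type*} [CommRing R] [Fintype ι]
    [Fintype κ] [DecidableEq ι] [DecidableEq κ] (A : Matrix κ ι R) :
    ∑ i, A.col i ⊗ₜ[R] (LinearMap.range A.vecMulLinear).mkQ (Pi.single i 1) = 0 := by
  calc ∑ i, A.col i ⊗ₜ[R] (LinearMap.range A.vecMulLinear).mkQ (Pi.single i 1)
      = ∑ l, Pi.single l 1 ⊗ₜ[R] (LinearMap.range A.vecMulLinear).mkQ (A.row l) := by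
        have hcol : ∀ i, A.col i = ∑ l, A l i • Pi.single l 1 := fun i => by
          ext l; simp [Finset.sum_apply, Pi.single_apply]
        have hrow : ∀ l, A.row l = ∑ i, A l i • Pi.single i 1 := fun l => by
          ext i; simp [Finset.sum_apply, Pi.single_apply]
        simp_rw [hcol, hrow, sum_tmul, map_sum, tmul_sum, map_smul, smul_tmul]
        exact Finset.sum_comm
    _ = 0 := Finset.sum_eq_zero fun l _ => by
        have : A.row l ∈ LinearMap.range A.vecMulLinear := ⟨Pi.single l 1, by simp⟩
        rw [Submodule.mkQ_apply, (Submodule.Quotient.mk_eq_zero _).2 this, tmul_zero]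

section Factorization

variable {R M F G : Type*} [CommRing R] [AddCommGroup M] [Module R M]
  [AddCommGroup F] [Module R F] [AddCommGroup G] [Module R G]

structure FreeFactorization (x : F →ₗ[R] M) where
  n : ℕ
  a : F →ₗ[R] (Fin n → R)
  b : (Fin n → R) →ₗ[R] M
  comp_eq : b ∘ₗ a = x

theorem FreeFactorization.sum_tmul_mk_single_eq_zero {p : ℕ} {x : (Fin p → R) →ₗ[R] M}
    (φ : FreeFactorization x) :
    ∑ i, x (Pi.single i 1) ⊗ₜ[R] (Submodule.Quotient.mk (Pi.single i 1) :
      (Fin p → R) ⧸ LinearMap.range (LinearMap.toMatrix' φ.a).vecMulLinear) = 0 := by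
  obtain ⟨n, a, b, rfl⟩ := φ
  have hcol : ∀ i, (LinearMap.toMatrix' a).col i = a (Pi.single i 1) := fun i => by
    rw [← Matrix.mulVec_single_one, LinearMap.toMatrix'_mulVec]
  simpa [map_sum, hcol] using
    congr(LinearMap.rTensor _ b $((LinearMap.toMatrix' a).sum_col_tmul_mkQ_single_eq_zero))

def FactorsThroughEveryFreeFactorization (x : F →ₗ[R] M) (v : F →ₗ[R] G) : Prop :=
  ∀ φ : FreeFactorization x, ∃ h : (Fin φ.n → R) →ₗ[R] G, h ∘ₗ φ.a = v

variable {x : F →ₗ[R] M} {v : F →ₗ[R] G}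

theorem FactorsThroughEveryFreeFactorization.comp (hv : FactorsThroughEveryFreeFactorization x v)
    {G' : Type*} [AddCommGroup G'] [Module R G'] (e : G →ₗ[R] G') :
    FactorsThroughEveryFreeFactorization x (e ∘ₗ v) :=
  fun φ =>
    let ⟨h, hh⟩ := hv φ
    ⟨e ∘ₗ h, by rw [← hh, LinearMap.comp_assoc]⟩

theorem FactorsThroughEveryFreeFactorization.apply_eq_zero [Module.Flat R M] [Module.Free R F]
    [Module.Finite R F] (hv : FactorsThroughEveryFreeFactorization x v) {z : F} (hz : x z = 0) :
    v z = 0 := by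
  obtain ⟨k, a, y, rfl, haz⟩ := Module.Flat.exists_factorization_of_apply_eq_zero_of_free hz
  let e := Finsupp.linearEquivFunOnFinite R R (Fin k)
  obtain ⟨h, rfl⟩ := hv ⟨k, e ∘ₗ a, y ∘ₗ e.symm, by ext; simp⟩
  simp [haz]

end Factorization

section MittagLeffler

variable {R M : Type u} [CommRing R] [AddCommGroup M] [Module R M] [Module.Flat R M]

theorem exists_factorsThroughEveryFreeFactorization (hML : IsMittagLeffler R M) {p : ℕ}
    (x : (Fin p → R) →ₗ[R] M) :
    ∃ (q : ℕ) (v : (Fin p → R) →ₗ[R] (Fin q → R)) (w : (Fin q → R) →ₗ[R] M),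
      w ∘ₗ v = x ∧ FactorsThroughEveryFreeFactorization x v := by
  classical
  -- `∑ i, x eᵢ ⊗ ξᵢ` vanishes in `M ⊗ ∏_φ C_φ`, where `C_φ` is the cokernel of the transpose of
  -- `φ.a`; its trivial vanishing, given by flatness, is the sought factorization.
  let ξ : Fin p → ∀ φ : FreeFactorization x,
      (Fin p → R) ⧸ LinearMap.range (LinearMap.toMatrix' φ.a).vecMulLinear :=
    fun i φ => Submodule.Quotient.mk (Pi.single i 1)
  have hξ : ∑ i, ξ i ⊗ₜ[R] x (Pi.single i 1) = 0 := by
    rw [← map_eq_zero_iff _ (TensorProduct.comm R _ M).injective, map_sum]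
    refine hML (FreeFactorization x) _ ?_
    ext φ
    simpa [ξ, map_sum] using φ.sum_tmul_mk_single_eq_zero
  have hinj : Function.Injective ((Submodule.span R (Set.range ξ)).subtype.rTensor M) :=
    Module.Flat.rTensor_preserves_injective_linearMap _ (Submodule.injective_subtype _)
  obtain ⟨q, c, y, hy, hc⟩ := vanishesTrivially_of_sum_tmul_eq_zero_of_rTensor_injective R hinj hξ
  refine ⟨q, (Matrix.of c).transpose.mulVecLin, Fintype.linearCombination R y, ?_, fun φ => ?_⟩
  · ext i
    simp [hy, Fintype.linearCombination_apply]
  · have hrow : ∀ l, ∃ z, Matrix.vecMul z (LinearMap.toMatrix' φ.a) = (Matrix.of c).transpose l :=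
      fun l => by
        have h : (∑ i, c i l • Pi.single i 1 : Fin p → R) ∈
            LinearMap.range (LinearMap.toMatrix' φ.a).vecMulLinear := by
          rw [← Submodule.Quotient.mk_eq_zero, ← Submodule.mkQ_apply, map_sum]
          simpa [ξ] using congr_fun (hc l) φ
        obtain ⟨z, hz⟩ := h
        refine ⟨z, ?_⟩
        rw [← Matrix.vecMulLinear_apply, hz]
        ext i
        simp [Finset.sum_apply, Pi.single_apply]
    choose z hz using hrow
    refine ⟨(Matrix.of z).mulVecLin, ?_⟩
    rw [← Matrix.toLin'_toMatrix' φ.a, Matrix.toLin'_apply', ← Matrix.mulVecLin_mul]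
    congr 1
    ext l i
    rw [Matrix.mul_apply_eq_vecMul]
    exact congr_fun (hz l) i

theorem exists_factorsThroughEveryFreeFactorization_mem_range (hML : IsMittagLeffler R M) {k : ℕ}
    (g : (Fin k → R) →ₗ[R] M) (m : M) :
    ∃ (k' : ℕ) (g' : (Fin k' → R) →ₗ[R] M) (f : (Fin k → R) →ₗ[R] (Fin k' → R)),
      g' ∘ₗ f = g ∧ m ∈ LinearMap.range g' ∧ FactorsThroughEveryFreeFactorization g f := by
  obtain ⟨q, v, w, hwv, hv⟩ := exists_factorsThroughEveryFreeFactorization hML g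
  let e := Fin.consLinearEquiv R (fun _ : Fin (q + 1) => R)
  refine ⟨q + 1, (LinearMap.toSpanSingleton R M m).coprod w ∘ₗ e.symm,
    (e ∘ₗ LinearMap.inr R R _) ∘ₗ v, ?_, ⟨e (1, 0), by simp⟩, hv.comp _⟩
  rw [← hwv]
  ext
  simp

theorem exists_sequence_factorsThroughEveryFreeFactorization (hML : IsMittagLeffler R M)
    (hcount : ∃ S : Set M, S.Countable ∧ Submodule.span R S = ⊤) :
    ∃ (k : ℕ → ℕ) (f : ∀ n, (Fin (k n) → R) →ₗ[R] (Fin (k (n + 1)) → R))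
      (g : ∀ n, (Fin (k n) → R) →ₗ[R] M), (∀ n, g (n + 1) ∘ₗ f n = g n) ∧
      ⨆ n, LinearMap.range (g n) = ⊤ ∧ ∀ n, FactorsThroughEveryFreeFactorization (g n) (f n) := by
  obtain ⟨S, hSc, hSs⟩ := hcount
  obtain ⟨m, hm⟩ := (hSc.insert 0).exists_eq_range (Set.insert_nonempty 0 S)
  have hmspan : Submodule.span R (Set.range m) = ⊤ := by
    rw [← hm, Submodule.span_insert_zero, hSs]
  choose k' g' f hgf hmem hf using fun (n : ℕ) (kg : Σ k, (Fin k → R) →ₗ[R] M) =>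
    exists_factorsThroughEveryFreeFactorization_mem_range hML kg.2 (m n)
  let c : ℕ → Σ k, (Fin k → R) →ₗ[R] M := fun n =>
    Nat.rec ⟨0, 0⟩ (fun n kg => ⟨k' n kg, g' n kg⟩) n
  refine ⟨fun n => (c n).1, fun n => f n (c n), fun n => (c n).2, fun n => hgf n (c n), ?_,
    fun n => hf n (c n)⟩
  rw [eq_top_iff, ← hmspan, Submodule.span_le]
  rintro _ ⟨n, rfl⟩
  exact Submodule.mem_iSup_of_mem (n + 1) (hmem n (c n))

end MittagLeffler

section Sequence

variable {R M : Type*} [CommRing R] [AddCommGroup M] [Module R M]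
  {F : ℕ → Type*} [∀ n, AddCommGroup (F n)] [∀ n, Module R (F n)] (f : ∀ n, F n →ₗ[R] F (n + 1))

def oneSubShift : (⨁ n, F n) →ₗ[R] ⨁ n, F n :=
  toModule R ℕ _ fun n => lof R ℕ F n - lof R ℕ F (n + 1) ∘ₗ f n

theorem oneSubShift_lof (n : ℕ) (z : F n) :
    oneSubShift f (lof R ℕ F n z) = lof R ℕ F n z - lof R ℕ F (n + 1) (f n z) := by
  simp [oneSubShift]

theorem eventually_exists_sub_lof_mem_range_oneSubShift (u : ⨁ n, F n) :
    ∀ᶠ N in atTop, ∃ z : F N, u - lof R ℕ F N z ∈ LinearMap.range (oneSubShift f) := by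
  induction u using DirectSum.induction_on with
  | zero => exact .of_forall fun N => ⟨0, by simp⟩
  | of n z =>
    filter_upwards [eventually_ge_atTop n] with N hN
    induction N, hN using Nat.le_induction with
    | base => exact ⟨z, by simp [← lof_eq_of R]⟩
    | succ N _ ih =>
      obtain ⟨z', hz'⟩ := ih
      refine ⟨f N z', ?_⟩
      convert Submodule.add_mem _ hz' (LinearMap.mem_range_self _ (lof R ℕ F N z')) using 1
      rw [oneSubShift_lof]
      abel
  | add u v hu hv =>
    filter_upwards [hu, hv] with N ⟨z, hz⟩ ⟨z', hz'⟩
    refine ⟨z + z', ?_⟩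
    convert Submodule.add_mem _ hz hz' using 1
    rw [map_add]
    abel

theorem exists_sub_comp_eq
    (hstab : ∀ n, ∃ h : F (n + 2) →ₗ[R] F (n + 1), h ∘ₗ f (n + 1) ∘ₗ f n = f n)
    {X : Type*} [AddCommGroup X] [Module R X] (φ : ∀ n, F n →ₗ[R] X) :
    ∃ ρ : ∀ n, F n →ₗ[R] X, ∀ n, ρ n - ρ (n + 1) ∘ₗ f n = φ n := by
  choose h hh using hstab
  let b : ∀ n, F (n + 1) →ₗ[R] X := fun n =>
    Nat.rec (motive := fun n => F (n + 1) →ₗ[R] X) 0 (fun n bn => (bn - φ (n + 1)) ∘ₗ h n) n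
  refine ⟨fun n => φ n + b n ∘ₗ f n, fun n => ?_⟩
  have hb : b (n + 1) ∘ₗ f (n + 1) ∘ₗ f n = (b n - φ (n + 1)) ∘ₗ f n := by
    change ((b n - φ (n + 1)) ∘ₗ h n) ∘ₗ f (n + 1) ∘ₗ f n = _
    rw [LinearMap.comp_assoc, hh n]
  dsimp only
  rw [LinearMap.add_comp, LinearMap.comp_assoc, hb, LinearMap.sub_comp]
  abel

theorem exists_retraction_oneSubShift
    (hstab : ∀ n, ∃ h : F (n + 2) →ₗ[R] F (n + 1), h ∘ₗ f (n + 1) ∘ₗ f n = f n) :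
    ∃ ρ, ρ ∘ₗ oneSubShift f = LinearMap.id := by
  obtain ⟨ρ, hρ⟩ := exists_sub_comp_eq f hstab (lof R ℕ F)
  refine ⟨toModule R ℕ _ ρ, DirectSum.linearMap_ext R fun n => LinearMap.ext fun z => ?_⟩
  simpa [oneSubShift_lof] using LinearMap.congr_fun (hρ n) z

variable (g : ∀ n, F n →ₗ[R] M)

theorem exact_oneSubShift_toModule (hgf : ∀ n, g (n + 1) ∘ₗ f n = g n)
    (hker : ∀ n z, g n z = 0 → f n z = 0) :
    Function.Exact (oneSubShift f) (toModule R ℕ M g) := by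
  have hcomp : toModule R ℕ M g ∘ₗ oneSubShift f = 0 := by
    refine DirectSum.linearMap_ext R fun n => LinearMap.ext fun z => ?_
    simp [oneSubShift_lof, ← LinearMap.congr_fun (hgf n) z]
  intro u
  refine ⟨fun hu => ?_, fun ⟨v, hv⟩ => hv ▸ LinearMap.congr_fun hcomp v⟩
  obtain ⟨N, z, hz⟩ := (eventually_exists_sub_lof_mem_range_oneSubShift f u).exists
  have hgz : g N z = 0 := by
    obtain ⟨v, hv⟩ := hz
    have := LinearMap.congr_fun hcomp v
    rw [LinearMap.comp_apply, hv, map_sub, hu, toModule_lof] at this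
    simpa using this
  have hu' : u = (u - lof R ℕ F N z) + oneSubShift f (lof R ℕ F N z) := by
    rw [oneSubShift_lof, hker N z hgz, map_zero, sub_zero, sub_add_cancel]
  rw [hu']
  exact Submodule.add_mem _ hz (LinearMap.mem_range_self _ _)

theorem surjective_toModule_of_iSup_range_eq_top (hspan : ⨆ n, LinearMap.range (g n) = ⊤) :
    Function.Surjective (toModule R ℕ M g) := by
  rw [← LinearMap.range_eq_top, eq_top_iff, ← hspan]
  exact iSup_le fun n => by
    rintro _ ⟨z, rfl⟩
    exact ⟨lof R ℕ F n z, toModule_lof R n z⟩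

theorem Module.Projective.of_sequence [∀ n, Module.Projective R (F n)]
    (hgf : ∀ n, g (n + 1) ∘ₗ f n = g n) (hker : ∀ n z, g n z = 0 → f n z = 0)
    (hstab : ∀ n, ∃ h : F (n + 2) →ₗ[R] F (n + 1), h ∘ₗ f (n + 1) ∘ₗ f n = f n)
    (hspan : ⨆ n, LinearMap.range (g n) = ⊤) :
    Module.Projective R M := by
  have hexact := exact_oneSubShift_toModule f g hgf hker
  obtain ⟨-, s, hs⟩ := (hexact.split_tfae'.out 1 0 rfl rfl).mp
    ⟨surjective_toModule_of_iSup_range_eq_top g hspan, exists_retraction_oneSubShift f hstab⟩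
  exact .of_split s _ hs

end Sequence

/-- A countably generated flat Mittag-Leffler module is projective. -/
theorem projective_of_countably_generated_flat_mittagLeffler
    (R : Type u) [CommRing R]
    (M : Type u) [AddCommGroup M] [Module R M]
    (hcount : ∃ S : Set M, S.Countable ∧ Submodule.span R S = ⊤)
    (hflat : Module.Flat R M) (hML : IsMittagLeffler R M) :
    Module.Projective R M := by
  obtain ⟨k, f, g, hgf, hspan, hf⟩ :=
    exists_sequence_factorsThroughEveryFreeFactorization hML hcount
  refine Module.Projective.of_sequence f g hgf (fun n _ hz => (hf n).apply_eq_zero hz)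
    (fun n => ?_) hspan
  exact hf n ⟨_, f (n + 1) ∘ₗ f n, g (n + 2), by rw [← LinearMap.comp_assoc, hgf, hgf]⟩
end

section
/- Every projective module over a commutative ring is a flat Mittag-Leffler module. -/
universe u

open TensorProduct

lemma piRightHom_naturality {R : Type u} [CommRing R]
    {M N : Type u} [AddCommGroup M] [Module R M] [AddCommGroup N] [Module R N]
    (g : M →ₗ[R] N) (ι : Type u) (Q : ι → Type u)
    [∀ i, AddCommGroup (Q i)] [∀ i, Module R (Q i)]
    (x : M ⊗[R] (∀ i, Q i)) (i : ι) :
    TensorProduct.piRightHom R R N Q (g.rTensor _ x) i =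
      (g.rTensor (Q i)) (TensorProduct.piRightHom R R M Q x i) := by
  induction x using TensorProduct.induction_on with
  | zero => simp
  | tmul m f => simp [TensorProduct.piRightHom_tmul]
  | add a b ha hb => simp [ha, hb]

lemma free_key {R : Type u} [CommRing R] (ι κ : Type u) [DecidableEq κ] (Q : ι → Type u)
    [∀ i, AddCommGroup (Q i)] [∀ i, Module R (Q i)]
    (x : (κ →₀ R) ⊗[R] (∀ i, Q i)) (i : ι) (j : κ) :
    TensorProduct.finsuppScalarLeft R (Q i) κ
        (TensorProduct.piRightHom R R (κ →₀ R) Q x i) j =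
      (TensorProduct.finsuppScalarLeft R (∀ i, Q i) κ x j) i := by
  induction x using TensorProduct.induction_on with
  | zero => simp
  | tmul p f =>
      simp [TensorProduct.piRightHom_tmul,
        TensorProduct.finsuppScalarLeft_apply_tmul_apply]
  | add a b ha hb => simp [ha, hb]

lemma free_piRightHom_injective {R : Type u} [CommRing R] (ι κ : Type u) [DecidableEq κ]
    (Q : ι → Type u) [∀ i, AddCommGroup (Q i)] [∀ i, Module R (Q i)] :
    Function.Injective (TensorProduct.piRightHom R R (κ →₀ R) Q) := by
  rw [injective_iff_map_eq_zero]
  intro x hx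
  have h : TensorProduct.finsuppScalarLeft R (∀ i, Q i) κ x = 0 := by
    refine Finsupp.ext fun j => funext fun i => ?_
    rw [← free_key ι κ Q x i j, hx]
    simp
  exact (map_eq_zero_iff _ (TensorProduct.finsuppScalarLeft R (∀ i, Q i) κ).injective).mp h

/-- Every projective module over a commutative ring is a flat Mittag-Leffler module. -/
theorem flat_mittagLeffler_of_projective
    (R : Type u) [CommRing R]
    (M : Type u) [AddCommGroup M] [Module R M]
    [Module.Projective R M] :
    Module.Flat R M ∧ IsMittagLeffler R M := by
  classical
  refine ⟨inferInstance, ?_⟩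
  intro ι Q _ _
  obtain ⟨s, hs⟩ := Module.projective_def.mp ‹Module.Projective R M›
  have hsplit : (Finsupp.linearCombination R (id : M → M)).comp s = LinearMap.id :=
    LinearMap.ext hs
  rw [injective_iff_map_eq_zero]
  intro x hx
  have h0 : TensorProduct.piRightHom R R (M →₀ R) Q (s.rTensor _ x) = 0 := by
    ext i
    rw [piRightHom_naturality s ι Q x i]
    simp [congrFun hx i]
  have h1 : s.rTensor (∀ i, Q i) x = 0 := free_piRightHom_injective ι M Q h0
  have : ((Finsupp.linearCombination R (id : M → M)).rTensor (∀ i, Q i))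
      (s.rTensor (∀ i, Q i) x) = x := by
    rw [← LinearMap.rTensor_comp_apply, hsplit, LinearMap.rTensor_id, LinearMap.id_apply]
  rw [h1, map_zero] at this
  exact this.symm
end

section
/- Let R be a commutative ring, M and N two R-modules, and suppose M ⊗_R (−), as a functor, is naturally isomorphic to colim over a directed system of functors Hom_R(N_i, −) for R-modules N_i, i.e., M ⊗_R Q ≅ colim_i Hom_R(N_i, Q) naturally in Q. Then M is flat. -/
universe u

open TensorProduct

/-- If the functor `Q ↦ M ⊗ Q` is naturally isomorphic to a directed colimit of the functors
`Q ↦ Hom(N i, Q)` (for an inverse system of modules `N i`), then `M` is flat.  The natural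
isomorphism is given concretely by a compatible family of cocone maps
`u Q i : Hom(N i, Q) → M ⊗ Q`, natural in `Q`, exhibiting `M ⊗ Q` as the directed colimit of
the `Hom(N i, Q)`. -/
theorem flat_of_tensor_iso_colimit_hom
    (R : Type u) [CommRing R]
    (M : Type u) [AddCommGroup M] [Module R M]
    (ι : Type u) [Preorder ι] [IsDirected ι (· ≤ ·)] [Nonempty ι]
    (N : ι → Type u) [∀ i, AddCommGroup (N i)] [∀ i, Module R (N i)]
    -- the inverse system of transition maps `N j → N i` for `i ≤ j`
    (t : ∀ i j, i ≤ j → (N j →ₗ[R] N i))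
    (ht_self : ∀ i (x : N i), t i i le_rfl x = x)
    (ht_comp : ∀ i j k (hij : i ≤ j) (hjk : j ≤ k) (x : N k),
      t i j hij (t j k hjk x) = t i k (hij.trans hjk) x)
    -- the cocone maps `Hom(N i, Q) → M ⊗ Q`
    (u : ∀ (Q : Type u) [AddCommGroup Q] [Module R Q] (i : ι),
      (N i →ₗ[R] Q) →ₗ[R] M ⊗[R] Q)
    -- compatibility with the transition maps
    (hcompat : ∀ (Q : Type u) [AddCommGroup Q] [Module R Q]
      (i j : ι) (h : i ≤ j) (φ : N i →ₗ[R] Q),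
      u Q j (φ.comp (t i j h)) = u Q i φ)
    -- naturality in `Q`
    (hnat : ∀ (Q Q' : Type u) [AddCommGroup Q] [Module R Q]
      [AddCommGroup Q'] [Module R Q'] (g : Q →ₗ[R] Q') (i : ι) (φ : N i →ₗ[R] Q),
      u Q' i (g.comp φ) = LinearMap.lTensor M g (u Q i φ))
    -- the induced map from the colimit is surjective …
    (hsurj : ∀ (Q : Type u) [AddCommGroup Q] [Module R Q] (x : M ⊗[R] Q),
      ∃ (i : ι) (φ : N i →ₗ[R] Q), u Q i φ = x)
    -- … and injective
    (hinj : ∀ (Q : Type u) [AddCommGroup Q] [Module R Q]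
      (i j : ι) (φ : N i →ₗ[R] Q) (ψ : N j →ₗ[R] Q), u Q i φ = u Q j ψ →
      ∃ (k : ι) (hik : i ≤ k) (hjk : j ≤ k),
        φ.comp (t i k hik) = ψ.comp (t j k hjk)) :
    Module.Flat R M := by
  rw [Module.Flat.iff_lTensor_injective']
  intro I
  rw [injective_iff_map_eq_zero]
  intro x hx
  obtain ⟨i, φ, rfl⟩ := hsurj _ x
  rw [← hnat _ _ I.subtype i φ] at hx
  have h0 : u R i (I.subtype.comp φ) = u R i 0 := by rw [hx, map_zero]
  obtain ⟨k, hik, hjk, hk⟩ := hinj _ i i _ _ h0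
  have hφ : φ.comp (t i k hik) = 0 := by
    ext y
    simpa using LinearMap.congr_fun hk y
  rw [← hcompat _ i k hik φ, hφ, map_zero]
end
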